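/- Let f : ℝ → (n×n real matrices → n×n real matrices) be such that f_t satisfies the affine group property on G for every t, and let w : ℝ → 𝔤 be a (smooth) disturbance. Suppose X, X̂ : ℝ → G are differentiable curves of invertible matrices with dX_t/dt = f_t(X_t) + X_t·w_t and dX̂_t/dt = f_t(X̂_t). Then the right-invariant error η_t := X_t·X̂_t⁻¹ is differentiable and satisfies dη_t/dt = f_t(η_t) − η_t·f_t(I) + η_t·(X̂_t·w_t·X̂_t⁻¹), i.e., the disturbance enters through the adjoint action Ad_{X̂_t}(w_t) = X̂_t w_t X̂_t⁻¹. (Lemma 3, right-invariant case.) -/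

import Mathlib

open NormedSpace

attribute [local instance] Matrix.normedAddCommGroup Matrix.normedSpace

/-- `f` satisfies the linear group property on `G`:
`f (X*Y) = f X * Y + X * f Y` for all `X, Y ∈ G`. -/
def LinearGroupProp {n : ℕ} (G : Set (Matrix (Fin n) (Fin n) ℝ))
    (f : Matrix (Fin n) (Fin n) ℝ → Matrix (Fin n) (Fin n) ℝ) : Prop :=
  ∀ X ∈ G, ∀ Y ∈ G, f (X * Y) = f X * Y + X * f Y

/-- `f` satisfies the affine group property on `G`:
`f (X*Y) = f X * Y + X * f Y - X * f 1 * Y` for all `X, Y ∈ G`. -/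
def AffineGroupProp {n : ℕ} (G : Set (Matrix (Fin n) (Fin n) ℝ))
    (f : Matrix (Fin n) (Fin n) ℝ → Matrix (Fin n) (Fin n) ℝ) : Prop :=
  ∀ X ∈ G, ∀ Y ∈ G, f (X * Y) = f X * Y + X * f Y - X * f 1 * Y

/-- `G` is a matrix Lie group: a closed subgroup of the group of invertible `n × n`
real matrices. -/
structure IsMatrixLieGroup {n : ℕ} (G : Set (Matrix (Fin n) (Fin n) ℝ)) : Prop where
  one_mem : (1 : Matrix (Fin n) (Fin n) ℝ) ∈ G
  mul_mem : ∀ {X Y : Matrix (Fin n) (Fin n) ℝ}, X ∈ G → Y ∈ G → X * Y ∈ G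
  isUnit : ∀ {X : Matrix (Fin n) (Fin n) ℝ}, X ∈ G → IsUnit X
  inv_mem : ∀ {X : Matrix (Fin n) (Fin n) ℝ}, X ∈ G → X⁻¹ ∈ G
  closed : IsClosed {A : {M : Matrix (Fin n) (Fin n) ℝ // IsUnit M} |
    (A : Matrix (Fin n) (Fin n) ℝ) ∈ G}

/-- The Lie algebra of the matrix Lie group `G`. -/
def lieAlgebraOf {n : ℕ} (G : Set (Matrix (Fin n) (Fin n) ℝ)) :
    Set (Matrix (Fin n) (Fin n) ℝ) :=
  {x | ∀ t : ℝ, exp (t • x) ∈ G}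


section Aux

variable {n : ℕ}

lemma hasDerivAt_matrix {M : ℝ → Matrix (Fin n) (Fin n) ℝ}
    {M' : Matrix (Fin n) (Fin n) ℝ} {t : ℝ} :
    HasDerivAt M M' t ↔ ∀ i j, HasDerivAt (fun s => M s i j) (M' i j) t := by
  change HasDerivAt (fun s => fun i j => M s i j : ℝ → Fin n → Fin n → ℝ) (fun i j => M' i j : Fin n → Fin n → ℝ) t ↔ _
  rw [hasDerivAt_pi]
  exact forall_congr' fun i => hasDerivAt_pi

lemma HasDerivAt.matrix_mul {A B : ℝ → Matrix (Fin n) (Fin n) ℝ}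
    {A' B' : Matrix (Fin n) (Fin n) ℝ} {t : ℝ}
    (hA : HasDerivAt A A' t) (hB : HasDerivAt B B' t) :
    HasDerivAt (fun s => A s * B s) (A' * B t + A t * B') t := by
  rw [hasDerivAt_matrix] at hA hB ⊢
  intro i j
  simp only [Matrix.mul_apply, Matrix.add_apply]
  rw [← Finset.sum_add_distrib]
  exact HasDerivAt.fun_sum fun k _ => (hA i k).mul (hB k j)

lemma differentiableAt_matrix_det {M : ℝ → Matrix (Fin n) (Fin n) ℝ} {t : ℝ}
    (h : ∀ i j, DifferentiableAt ℝ (fun s => M s i j) t) :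
    DifferentiableAt ℝ (fun s => (M s).det) t := by
  simp only [Matrix.det_apply']
  exact DifferentiableAt.fun_sum fun σ _ =>
    (DifferentiableAt.fun_finsetProd fun i _ => h (σ i) i).const_mul _

lemma differentiableAt_matrix_inv {M : ℝ → Matrix (Fin n) (Fin n) ℝ} {t : ℝ}
    (h : ∀ i j, DifferentiableAt ℝ (fun s => M s i j) t) (hu : IsUnit (M t)) :
    DifferentiableAt ℝ (fun s => (M s)⁻¹) t := by
  have hdet : DifferentiableAt ℝ (fun s => (M s).det) t := differentiableAt_matrix_det h
  have hdet0 : (M t).det ≠ 0 := ((Matrix.isUnit_iff_isUnit_det _).1 hu).ne_zero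
  have hadj : DifferentiableAt ℝ (fun s => (M s).adjugate) t := by
    change DifferentiableAt ℝ (fun s => fun i j => (M s).adjugate i j : ℝ → Fin n → Fin n → ℝ) t
    rw [differentiableAt_pi]; intro i; rw [differentiableAt_pi]; intro j
    simp only [Matrix.adjugate_apply]
    apply differentiableAt_matrix_det
    intro k l
    by_cases hk : k = j
    · simpa [Matrix.updateRow_apply, hk] using differentiableAt_const (Pi.single i (1:ℝ) l)
    · simpa [Matrix.updateRow_apply, hk] using h k l
  have heq : (fun s => (M s)⁻¹) = fun s => ((M s).det)⁻¹ • (M s).adjugate := by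
    funext s; rw [Matrix.inv_def, Ring.inverse_eq_inv']
  rw [heq]
  exact (hdet.inv hdet0).smul hadj

end Aux

/-- **Lemma 3, right-invariant case.** If `f t` satisfies the affine group property on
`G` for every `t`, `w` is a smooth disturbance with values in the Lie algebra of `G`,
and `X`, `X̂` are curves in `G` with `dX/dt = f t (X t) + X t * w t` and
`dX̂/dt = f t (X̂ t)`, then the right-invariant error `η t = X t * (X̂ t)⁻¹` is
differentiable with
`dη/dt = f t (η t) - η t * f t 1 + η t * (X̂ t * w t * (X̂ t)⁻¹)`. -/
theorem right_invariant_error_dynamics {n : ℕ} (hn : 0 < n)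
    (G : Set (Matrix (Fin n) (Fin n) ℝ)) (hG : IsMatrixLieGroup G)
    (f : ℝ → Matrix (Fin n) (Fin n) ℝ → Matrix (Fin n) (Fin n) ℝ)
    (hf : ∀ t : ℝ, AffineGroupProp G (f t))
    (w : ℝ → Matrix (Fin n) (Fin n) ℝ)
    (hw_mem : ∀ t : ℝ, w t ∈ lieAlgebraOf G)
    (hw_smooth : ContDiff ℝ (⊤ : ℕ∞) w)
    (X Xhat : ℝ → Matrix (Fin n) (Fin n) ℝ)
    (hX_mem : ∀ t : ℝ, X t ∈ G) (hXhat_mem : ∀ t : ℝ, Xhat t ∈ G)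
    (hX_unit : ∀ t : ℝ, IsUnit (X t)) (hXhat_unit : ∀ t : ℝ, IsUnit (Xhat t))
    (hX_deriv : ∀ t : ℝ, HasDerivAt X (f t (X t) + X t * w t) t)
    (hXhat_deriv : ∀ t : ℝ, HasDerivAt Xhat (f t (Xhat t)) t) :
    ∀ t : ℝ, HasDerivAt (fun s => X s * (Xhat s)⁻¹)
      (f t (X t * (Xhat t)⁻¹) - (X t * (Xhat t)⁻¹) * f t 1
        + (X t * (Xhat t)⁻¹) * (Xhat t * w t * (Xhat t)⁻¹)) t := by
  intro t
  have hXY : Xhat t * (Xhat t)⁻¹ = 1 :=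
    Matrix.mul_nonsing_inv _ ((Matrix.isUnit_iff_isUnit_det _).1 (hXhat_unit t))
  have hYX : (Xhat t)⁻¹ * Xhat t = 1 :=
    Matrix.nonsing_inv_mul _ ((Matrix.isUnit_iff_isUnit_det _).1 (hXhat_unit t))
  have hent : ∀ i j, DifferentiableAt ℝ (fun s => Xhat s i j) t := fun i j =>
    (hasDerivAt_matrix.1 (hXhat_deriv t) i j).differentiableAt
  have hYdiff : DifferentiableAt ℝ (fun s => (Xhat s)⁻¹) t :=
    differentiableAt_matrix_inv hent (hXhat_unit t)
  obtain ⟨D, hD⟩ : ∃ D, HasDerivAt (fun s => (Xhat s)⁻¹) D t := ⟨_, hYdiff.hasDerivAt⟩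
  have hconst : (fun s => Xhat s * (Xhat s)⁻¹) = fun _ => (1 : Matrix (Fin n) (Fin n) ℝ) :=
    funext fun s =>
      Matrix.mul_nonsing_inv _ ((Matrix.isUnit_iff_isUnit_det _).1 (hXhat_unit s))
  have h0 : HasDerivAt (fun s => Xhat s * (Xhat s)⁻¹)
      (f t (Xhat t) * (Xhat t)⁻¹ + Xhat t * D) t := (hXhat_deriv t).matrix_mul hD
  rw [hconst] at h0
  have huniq : f t (Xhat t) * (Xhat t)⁻¹ + Xhat t * D = 0 :=
    h0.unique (hasDerivAt_const t 1)
  have hD_eq : D = -((Xhat t)⁻¹ * f t (Xhat t) * (Xhat t)⁻¹) := by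
    have h1 : Xhat t * D = -(f t (Xhat t) * (Xhat t)⁻¹) :=
      eq_neg_of_add_eq_zero_right huniq
    calc D = ((Xhat t)⁻¹ * Xhat t) * D := by rw [hYX, one_mul]
      _ = (Xhat t)⁻¹ * (Xhat t * D) := by rw [Matrix.mul_assoc]
      _ = -((Xhat t)⁻¹ * (f t (Xhat t) * (Xhat t)⁻¹)) := by rw [h1, mul_neg]
      _ = -((Xhat t)⁻¹ * f t (Xhat t) * (Xhat t)⁻¹) := by rw [Matrix.mul_assoc]
  have hmain : HasDerivAt (fun s => X s * (Xhat s)⁻¹)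
      ((f t (X t) + X t * w t) * (Xhat t)⁻¹ + X t * D) t := (hX_deriv t).matrix_mul hD
  have hη_mem : X t * (Xhat t)⁻¹ ∈ G := hG.mul_mem (hX_mem t) (hG.inv_mem (hXhat_mem t))
  have hXeq : (X t * (Xhat t)⁻¹) * Xhat t = X t := by
    rw [Matrix.mul_assoc, hYX, mul_one]
  have hfX : f t (X t) = f t (X t * (Xhat t)⁻¹) * Xhat t
      + (X t * (Xhat t)⁻¹) * f t (Xhat t)
      - (X t * (Xhat t)⁻¹) * f t 1 * Xhat t := by
    have := hf t _ hη_mem _ (hXhat_mem t)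
    rwa [hXeq] at this
  have hgoal : (f t (X t) + X t * w t) * (Xhat t)⁻¹ + X t * D
      = f t (X t * (Xhat t)⁻¹) - (X t * (Xhat t)⁻¹) * f t 1
        + (X t * (Xhat t)⁻¹) * (Xhat t * w t * (Xhat t)⁻¹) := by
    rw [hD_eq, hfX]
    generalize hE : X t * (Xhat t)⁻¹ = E
    rw [← hE, ← hXeq, hE]
    have hc : ∀ Z : Matrix (Fin n) (Fin n) ℝ, Xhat t * ((Xhat t)⁻¹ * Z) = Z := fun Z => by
      rw [← Matrix.mul_assoc, hXY, one_mul]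
    simp only [Matrix.mul_assoc, mul_neg, add_mul, sub_mul, hc, hXY, Matrix.mul_one]
    abel
  rw [hgoal] at hmain
  exact hmain
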